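/- arXiv:2007.11426 — 2 statements merged into one kernel-verified Lean document; each statement's English description precedes it below -/
import Mathlib

section
/- Let g satisfy Assumption B, L > 0, and let u₀ > 0, q₀ > 0 be constants such that for every q ∈ ℝ: every element of prox_{L⁻¹g}(q) is 0 or of modulus at least u₀, and 0 ∈ prox_{L⁻¹g}(q) if and only if |q| ≤ q₀. If u ∈ G(z), then: if u > 0 then u ≥ max(u₀, (L·q₀ − z)/L); if u < 0 then u ≤ min(−u₀, −(L·q₀ + z)/L); and if u = 0 then |z| ≤ L·q₀. -/
/-! Writing `q = u + z / L`, the objective defining `u ∈ G(z)` is, after multiplication by `L⁻¹`,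
the proximal objective at `q` up to an additive constant, so `u ∈ prox_{L⁻¹g}(q)`.
Comparing this with `0 ∈ prox_{L⁻¹g}(q')` (tested at `0` and at `u` respectively, using
`g 0 = 0`) gives `u * q' ≤ u * q`: a nonzero prox point lies on the side of `q₀` (resp. `-q₀`)
that `q` does. The threshold hypothesis then turns `q ≥ q₀`, `q ≤ -q₀`, `|q| ≤ q₀` into the
three claims. -/

/-- `u ∈ prox_{s·g}(q)`: `u` is a global minimizer of `v ↦ ½(v − q)² + s·g(v)`,
where `g : ℝ → ℝ ∪ {+∞}` is modeled as an `EReal`-valued function. -/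
def IsProx (g : ℝ → EReal) (s q u : ℝ) : Prop :=
  ∀ v : ℝ, (((u - q) ^ 2 / 2 : ℝ) : EReal) + (s : EReal) * g u ≤
    (((v - q) ^ 2 / 2 : ℝ) : EReal) + (s : EReal) * g v

/-- `u ∈ G(z)` for the set-valued map `G = G_L`: `u` is a global minimizer of
`v ↦ −z·v + (L/2)(v − u)² + g(v)`. -/
def InG (g : ℝ → EReal) (L z u : ℝ) : Prop :=
  ∀ v : ℝ, ((-z * u : ℝ) : EReal) + g u ≤ ((-z * v + L / 2 * (v - u) ^ 2 : ℝ) : EReal) + g v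

/-- Assumption (B3.a): `g` is twice differentiable on some interval `(0, ε)` and
`limsup_{u↘0} g''(u) ∈ (−∞, 0)`. -/
def AssB3a (g : ℝ → EReal) : Prop :=
  ∃ ε : ℝ, 0 < ε ∧ ∃ gr g1 g2 : ℝ → ℝ,
    (∀ u ∈ Set.Ioo (0:ℝ) ε, g u = ((gr u : ℝ) : EReal)) ∧
    (∀ u ∈ Set.Ioo (0:ℝ) ε, HasDerivAt gr (g1 u) u) ∧
    (∀ u ∈ Set.Ioo (0:ℝ) ε, HasDerivAt g1 (g2 u) u) ∧
    Filter.limsup (fun u => ((g2 u : ℝ) : EReal)) (nhdsWithin 0 (Set.Ioi (0:ℝ)))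
      ∈ Set.Ioo (⊥ : EReal) (0 : EReal)

/-- Assumption (B3.b): `g` is twice differentiable on some interval `(0, ε)` and
`lim_{u↘0} g''(u) = −∞`. -/
def AssB3b (g : ℝ → EReal) : Prop :=
  ∃ ε : ℝ, 0 < ε ∧ ∃ gr g1 g2 : ℝ → ℝ,
    (∀ u ∈ Set.Ioo (0:ℝ) ε, g u = ((gr u : ℝ) : EReal)) ∧
    (∀ u ∈ Set.Ioo (0:ℝ) ε, HasDerivAt gr (g1 u) u) ∧
    (∀ u ∈ Set.Ioo (0:ℝ) ε, HasDerivAt g1 (g2 u) u) ∧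
    Filter.Tendsto g2 (nhdsWithin 0 (Set.Ioi (0:ℝ))) Filter.atBot

/-- Assumption (B3.c): `liminf_{u↘0} g(u) > 0`. -/
def AssB3c (g : ℝ → EReal) : Prop :=
  0 < Filter.liminf g (nhdsWithin 0 (Set.Ioi (0:ℝ)))

open EReal

theorem IsProx.mul_le_mul_of_isProx_zero {g : ℝ → EReal} {s q q' u : ℝ} (h0 : g 0 = 0)
    (hu : IsProx g s q u) (hq' : IsProx g s q' 0) : u * q' ≤ u * q := by
  have hle := hu 0
  have hge := hq' u
  simp only [h0, mul_zero, add_zero, zero_sub, neg_sq] at hle hge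
  have hne_top : (s : EReal) * g u ≠ ⊤ := fun h => by simp [h] at hle
  have hne_bot : (s : EReal) * g u ≠ ⊥ := fun h => by simp [h] at hge
  lift (s : EReal) * g u to ℝ using ⟨hne_top, hne_bot⟩ with c
  have hle' : (u - q) ^ 2 / 2 + c ≤ q ^ 2 / 2 := by exact_mod_cast hle
  have hge' : q' ^ 2 / 2 ≤ (u - q') ^ 2 / 2 + c := by exact_mod_cast hge
  nlinarith

theorem InG.isProx {g : ℝ → EReal} {L z u : ℝ} (hL : 0 < L) (hu : InG g L z u) :
    IsProx g L⁻¹ (u + z / L) u := by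
  obtain ⟨K, hshift⟩ : ∃ K : ℝ, ∀ v : ℝ,
      (v - (u + z / L)) ^ 2 / 2 = L⁻¹ * (-z * v + L / 2 * (v - u) ^ 2) + K :=
    ⟨z * u / L + z ^ 2 / (2 * L ^ 2), fun v => by field_simp; ring⟩
  have hshift_self : (u - (u + z / L)) ^ 2 / 2 = L⁻¹ * (-z * u) + K := by
    simpa using hshift u
  have hLinv : (0 : EReal) ≤ (L⁻¹ : ℝ) := by exact_mod_cast (inv_pos.2 hL).le
  intro v
  have hscaled := mul_le_mul_of_nonneg_left (hu v) hLinv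
  rw [left_distrib_of_nonneg_of_ne_top hLinv (coe_ne_top _),
    left_distrib_of_nonneg_of_ne_top hLinv (coe_ne_top _), ← coe_mul, ← coe_mul] at hscaled
  rw [hshift_self, hshift, coe_add, coe_add, add_right_comm _ (K : EReal),
    add_right_comm _ (K : EReal)]
  exact add_le_add_left hscaled _

theorem G_properties_general (g : ℝ → EReal)
    (h0 : g 0 = 0)
    (L : ℝ) (hL : 0 < L)
    (u₀ : ℝ) (q₀ : ℝ) (hq₀ : 0 < q₀)
    (hsparse : ∀ q u : ℝ, IsProx g L⁻¹ q u → u = 0 ∨ u₀ ≤ |u|)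
    (hzero : ∀ q : ℝ, IsProx g L⁻¹ q 0 ↔ |q| ≤ q₀)
    (z u : ℝ) (hu : InG g L z u) :
    (0 < u → max u₀ ((L * q₀ - z) / L) ≤ u)
    ∧ (u < 0 → u ≤ min (-u₀) (-((L * q₀ + z) / L)))
    ∧ (u = 0 → |z| ≤ L * q₀) := by
  have hprox := hu.isProx hL
  have hmono (q' : ℝ) (hq' : |q'| ≤ q₀) : u * q' ≤ u * (u + z / L) :=
    hprox.mul_le_mul_of_isProx_zero h0 ((hzero q').2 hq')
  refine ⟨fun hu_pos => ?_, fun hu_neg => ?_, fun hu_zero => ?_⟩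
  · have hu₀ : u₀ ≤ u := by
      simpa [hu_pos.ne', abs_of_pos hu_pos] using hsparse _ _ hprox
    have hq : q₀ ≤ u + z / L := le_of_mul_le_mul_left (hmono q₀ (abs_of_pos hq₀).le) hu_pos
    have hbound : (L * q₀ - z) / L = q₀ - z / L := by field_simp
    exact max_le hu₀ (by linarith)
  · have hu₀ : u ≤ -u₀ := by
      have := hsparse _ _ hprox
      simp only [hu_neg.ne, false_or, abs_of_neg hu_neg] at this
      linarith
    have hq : u + z / L ≤ -q₀ :=
      (mul_le_mul_left_of_neg hu_neg).1 (hmono (-q₀) (by rw [abs_neg, abs_of_pos hq₀]))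
    have hbound : -((L * q₀ + z) / L) = -q₀ - z / L := by field_simp; ring
    exact le_min hu₀ (by linarith)
  · subst hu_zero
    have hq := (hzero _).1 hprox
    rwa [zero_add, abs_div, abs_of_pos hL, div_le_iff₀' hL] at hq

/-- under Assumption B, if `u₀, q₀ > 0` are such that every element of
`prox_{L⁻¹g}(q)` is `0` or of modulus `≥ u₀`, and `0 ∈ prox_{L⁻¹g}(q) ↔ |q| ≤ q₀`, then for
`u ∈ G(z)`: if `u > 0` then `u ≥ max(u₀, (Lq₀ − z)/L)`; if `u < 0` then
`u ≤ min(−u₀, −(Lq₀ + z)/L)`; and if `u = 0` then `|z| ≤ Lq₀`. -/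
theorem G_properties (g : ℝ → EReal)
    (hlsc : LowerSemicontinuous g)
    (hsymm : ∀ x : ℝ, g (-x) = g x)
    (h0 : g 0 = 0)
    (hproper : ∃ u : ℝ, u ≠ 0 ∧ g u ≠ ⊤)
    (hB3 : AssB3a g ∨ AssB3b g ∨ AssB3c g)
    (hpos : ∀ x : ℝ, 0 ≤ g x)
    (L : ℝ) (hL : 0 < L)
    (u₀ : ℝ) (hu₀ : 0 < u₀) (q₀ : ℝ) (hq₀ : 0 < q₀)
    (hsparse : ∀ q u : ℝ, IsProx g L⁻¹ q u → u = 0 ∨ u₀ ≤ |u|)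
    (hzero : ∀ q : ℝ, IsProx g L⁻¹ q 0 ↔ |q| ≤ q₀)
    (z u : ℝ) (hu : InG g L z u) :
    (0 < u → max u₀ ((L * q₀ - z) / L) ≤ u)
    ∧ (u < 0 → u ≤ min (-u₀) (-((L * q₀ + z) / L)))
    ∧ (u = 0 → |z| ≤ L * q₀) :=
  G_properties_general g h0 L hL u₀ q₀ hq₀ hsparse hzero z u hu
end

section
/- Let Ω ⊂ ℝⁿ be Lebesgue measurable with finite measure and (u_k) ⊂ L²(Ω) a sequence with Σ_{k=1}^∞ ‖u_{k+1} − u_k‖²_{L²(Ω)} < ∞ (as holds for proximal gradient iterates with L > L_f). Let b > a and define A_k⁺ := {x ∈ Ω : u_k(x) ≥ b}, A_k⁻ := {x ∈ Ω : u_k(x) ≤ a} with characteristic functions χ_k⁺, χ_k⁻. Then Σ_{k=1}^∞ ‖χ_{k+1}⁺·χ_k⁻ + χ_{k+1}⁻·χ_k⁺‖_{L¹(Ω)} < ∞. If in addition χ_k⁺ + χ_k⁻ = 1 almost everywhere for all k, then there are characteristic functions χ⁺, χ⁻ with χ⁺ + χ⁻ = 1 almost everywhere such that χ_k⁺ → χ⁺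 and χ_k⁻ → χ⁻ strongly in L¹(Ω) and pointwise almost everywhere. -/
open MeasureTheory Filter Set
open scoped ENNReal symmDiff

/-!
Where `u_{k+1} ≥ b` and `u_k ≤ a`, or the other way round, we have `|u_{k+1} - u_k| ≥ b - a`, so by
Chebyshev these crossing sets have measure at most `‖u_{k+1} - u_k‖² / (b - a)²`, which is summable.
When `A_k⁺` and `A_k⁻` partition `Ω`, the crossings at step `k` are exactly `A_{k+1}⁺ ∆ A_k⁺`, so
`∑ μ (A_{k+1}⁺ ∆ A_k⁺) < ∞`. By Borel–Cantelli almost every point changes side only finitely often,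
hence the limit set is `A⁺ = liminf A_k⁺` (and `A⁻` its complement), and
`μ (A_k⁺ ∆ A⁺) ≤ ∑_{j ≥ k} μ (A_{j+1}⁺ ∆ A_j⁺) → 0`.
-/

variable {α : Type*}

namespace MeasureTheory.Lp

variable [MeasurableSpace α] {μ : Measure α}

theorem meas_abs_ge_le_ofReal_norm_sq_div (f : Lp ℝ 2 μ) {ε : ℝ} (hε : 0 < ε) :
    μ {x | ε ≤ |f x|} ≤ ENNReal.ofReal (‖f‖ ^ 2 / ε ^ 2) := by
  have hset : {x | ε ≤ |f x|} = {x | ENNReal.ofReal ε ≤ ‖f x‖ₑ} := by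
    ext x
    simp [Real.enorm_eq_ofReal_abs, ENNReal.ofReal_le_ofReal_iff (abs_nonneg _)]
  have hcheb := meas_ge_le_mul_pow_eLpNorm_enorm μ two_ne_zero ENNReal.ofNat_ne_top
    (Lp.aestronglyMeasurable f) (ENNReal.ofReal_pos.2 hε).ne' (by simp)
  rw [hset]
  refine hcheb.trans_eq ?_
  rw [← enorm_def, ← ofReal_norm, ENNReal.ofReal_div_of_pos (by positivity), div_eq_mul_inv,
    mul_comm, ENNReal.ofReal_pow hε.le, ENNReal.ofReal_pow (norm_nonneg _), ENNReal.inv_pow,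
    ENNReal.toReal_ofNat, ENNReal.rpow_ofNat, ENNReal.rpow_ofNat]

theorem meas_crossing_le (f g : Lp ℝ 2 μ) {a b : ℝ} (hab : a < b) :
    μ ({x | b ≤ f x} ∩ {x | g x ≤ a}) ≤ ENNReal.ofReal (‖f - g‖ ^ 2 / (b - a) ^ 2) :=
  calc μ ({x | b ≤ f x} ∩ {x | g x ≤ a})
      ≤ μ {x | b - a ≤ |(f - g : Lp ℝ 2 μ) x|} := by
        refine measure_mono_ae ?_
        filter_upwards [Lp.coeFn_sub f g] with x hx ⟨hfx, hgx⟩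
        rw [mem_ofPred_eq] at hfx hgx
        show b - a ≤ |(f - g : Lp ℝ 2 μ) x|
        rw [hx, Pi.sub_apply]
        exact le_abs.2 (Or.inl (by linarith))
    _ ≤ ENNReal.ofReal (‖f - g‖ ^ 2 / (b - a) ^ 2) :=
        meas_abs_ge_le_ofReal_norm_sq_div _ (sub_pos.2 hab)

theorem tsum_meas_crossings_ne_top (u : ℕ → Lp ℝ 2 μ)
    (hsum : Summable fun k => ‖u (k + 1) - u k‖ ^ 2) {a b : ℝ} (hab : a < b) :
    ∑' k, (μ ({x | b ≤ u (k + 1) x} ∩ {x | u k x ≤ a}) +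
      μ ({x | u (k + 1) x ≤ a} ∩ {x | b ≤ u k x})) ≠ ∞ := by
  have hterm : ∀ k, μ ({x | b ≤ u (k + 1) x} ∩ {x | u k x ≤ a}) +
      μ ({x | u (k + 1) x ≤ a} ∩ {x | b ≤ u k x})
        ≤ ENNReal.ofReal (2 / (b - a) ^ 2 * ‖u (k + 1) - u k‖ ^ 2) := fun k => by
    have h₂ := meas_crossing_le (u k) (u (k + 1)) hab
    rw [inter_comm, norm_sub_rev] at h₂
    calc _ ≤ ENNReal.ofReal (‖u (k + 1) - u k‖ ^ 2 / (b - a) ^ 2) +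
          ENNReal.ofReal (‖u (k + 1) - u k‖ ^ 2 / (b - a) ^ 2) :=
          add_le_add (meas_crossing_le _ _ hab) h₂
      _ = _ := by rw [← ENNReal.ofReal_add (by positivity) (by positivity)]; ring_nf
  refine ne_top_of_le_ne_top ?_ (ENNReal.tsum_le_tsum hterm)
  rw [← ENNReal.ofReal_tsum_of_nonneg (fun k => by positivity) (hsum.mul_left _)]
  exact ENNReal.ofReal_ne_top

end MeasureTheory.Lp

section Indicator

theorem ofReal_indicator_mul_add_indicator_mul (s t s' t' : Set α) (x : α) :
    ENNReal.ofReal (s.indicator (fun _ => (1 : ℝ)) x * t.indicator (fun _ => 1) x +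
      s'.indicator (fun _ => 1) x * t'.indicator (fun _ => 1) x) =
      (s ∩ t).indicator 1 x + (s' ∩ t').indicator 1 x := by
  by_cases hs : x ∈ s <;> by_cases ht : x ∈ t <;> by_cases hs' : x ∈ s' <;>
    by_cases ht' : x ∈ t' <;> simp [hs, ht, hs', ht', one_add_one_eq_two]

theorem ofReal_abs_indicator_sub_indicator (s t : Set α) (x : α) :
    ENNReal.ofReal |s.indicator (fun _ => (1 : ℝ)) x - t.indicator (fun _ => 1) x| =
      (s ∆ t).indicator 1 x := by
  by_cases hs : x ∈ s <;> by_cases ht : x ∈ t <;> simp [hs, ht, mem_symmDiff]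

theorem indicator_one_add_indicator_one_eq_one_iff (s t : Set α) (x : α) :
    s.indicator (fun _ => (1 : ℝ)) x + t.indicator (fun _ => 1) x = 1 ↔ (x ∈ t ↔ x ∉ s) := by
  by_cases hs : x ∈ s <;> by_cases ht : x ∈ t <;> simp [hs, ht, one_add_one_eq_two]

variable [MeasurableSpace α] {μ : Measure α}

theorem lintegral_ofReal_indicator_mul_add_indicator_mul {s t s' t' : Set α}
    (hst : MeasurableSet (s ∩ t)) (hst' : MeasurableSet (s' ∩ t')) :
    ∫⁻ x, ENNReal.ofReal (s.indicator (fun _ => (1 : ℝ)) x * t.indicator (fun _ => 1) x +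
      s'.indicator (fun _ => 1) x * t'.indicator (fun _ => 1) x) ∂μ = μ (s ∩ t) + μ (s' ∩ t') := by
  simp_rw [ofReal_indicator_mul_add_indicator_mul]
  rw [lintegral_add_left (measurable_one.indicator hst), lintegral_indicator_one hst,
    lintegral_indicator_one hst']

theorem lintegral_ofReal_abs_indicator_sub_indicator {s t : Set α} (hs : MeasurableSet s)
    (ht : MeasurableSet t) :
    ∫⁻ x, ENNReal.ofReal |s.indicator (fun _ => (1 : ℝ)) x - t.indicator (fun _ => 1) x| ∂μ =
      μ (s ∆ t) := by
  simp_rw [ofReal_abs_indicator_sub_indicator, lintegral_indicator_one (hs.symmDiff ht)]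

end Indicator

section SymmDiff

variable {s : ℕ → Set α}

theorem mem_liminf_iff_of_forall_notMem_symmDiff {x : α} {k : ℕ}
    (h : ∀ j, x ∉ s (j + k + 1) ∆ s (j + k)) : x ∈ liminf s atTop ↔ x ∈ s k := by
  have hconst : ∀ j, x ∈ s (j + k) ↔ x ∈ s k := by
    intro j
    induction j with
    | zero => rw [zero_add]
    | succ j ih =>
      have hj := h j
      rw [mem_symmDiff] at hj
      rw [add_right_comm, ← ih]
      tauto
  rw [mem_liminf_iff_eventually_mem, eventually_atTop]
  refine ⟨fun ⟨N, hN⟩ => (hconst N).1 (hN _ (Nat.le_add_right N k)), fun hk => ⟨k, fun j hj => ?_⟩⟩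
  obtain ⟨i, rfl⟩ := Nat.exists_eq_add_of_le' hj
  exact (hconst i).2 hk

variable [MeasurableSpace α] {μ : Measure α}

theorem measure_symmDiff_liminf_le (k : ℕ) :
    μ (s k ∆ liminf s atTop) ≤ ∑' j, μ (s (j + k + 1) ∆ s (j + k)) := by
  refine (measure_mono fun x hx => ?_).trans (measure_iUnion_le _)
  by_contra hx'
  simp only [mem_iUnion, not_exists] at hx'
  rw [mem_symmDiff, mem_liminf_iff_of_forall_notMem_symmDiff hx'] at hx
  tauto

theorem measure_symmDiff_succ_le_of_ae_mem_iff_notMem {t : ℕ → Set α}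
    (h : ∀ᵐ x ∂μ, ∀ k, x ∈ t k ↔ x ∉ s k) (k : ℕ) :
    μ (s (k + 1) ∆ s k) ≤ μ (s (k + 1) ∩ t k) + μ (t (k + 1) ∩ s k) := by
  refine (measure_mono_ae (h.mono fun x hx hmem => ?_)).trans (measure_union_le _ _)
  change x ∈ s (k + 1) ∆ s k at hmem
  change x ∈ s (k + 1) ∩ t k ∪ t (k + 1) ∩ s k
  rw [mem_symmDiff] at hmem
  simp only [mem_union, mem_inter_iff, hx]
  tauto

theorem measure_symmDiff_compl_of_ae_mem_iff_notMem {t : ℕ → Set α}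
    (h : ∀ᵐ x ∂μ, ∀ k, x ∈ t k ↔ x ∉ s k) (k : ℕ) (A : Set α) :
    μ (t k ∆ Aᶜ) = μ (s k ∆ A) := by
  refine measure_congr (eventuallyEq_set.2 ?_)
  filter_upwards [h] with x hx
  simp only [mem_symmDiff, mem_compl_iff, hx k]
  tauto

theorem tendsto_measure_symmDiff_liminf (hs : ∑' k, μ (s (k + 1) ∆ s k) ≠ ∞) :
    Tendsto (fun k => μ (s k ∆ liminf s atTop)) atTop (nhds 0) :=
  tendsto_of_tendsto_of_tendsto_of_le_of_le tendsto_const_nhds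
    (ENNReal.tendsto_sum_nat_add _ hs) (fun _ => zero_le) measure_symmDiff_liminf_le

theorem ae_eventually_mem_iff_mem_liminf (hs : ∑' k, μ (s (k + 1) ∆ s k) ≠ ∞) :
    ∀ᵐ x ∂μ, ∀ᶠ k in atTop, (x ∈ s k ↔ x ∈ liminf s atTop) := by
  filter_upwards [ae_eventually_notMem hs] with x hx
  obtain ⟨N, hN⟩ := eventually_atTop.1 hx
  refine eventually_atTop.2 ⟨N, fun k hk => ?_⟩
  exact (mem_liminf_iff_of_forall_notMem_symmDiff fun j => hN _ (by omega)).symm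

end SymmDiff

theorem chi_plus_minus_converge_general (n : ℕ) (Ω : Set (EuclideanSpace ℝ (Fin n)))
    (u : ℕ → Lp ℝ 2 (volume.restrict Ω))
    (hsum : Summable fun k : ℕ => ‖u (k + 1) - u k‖ ^ 2)
    (a b : ℝ) (hab : a < b)
    -- the characteristic functions of `A_k⁺` and `A_k⁻`:
    (chiP chiM : ℕ → EuclideanSpace ℝ (Fin n) → ℝ)
    (hchiP : ∀ k, chiP k =
      Set.indicator {x | b ≤ (u k : EuclideanSpace ℝ (Fin n) → ℝ) x} (fun _ => (1 : ℝ)))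
    (hchiM : ∀ k, chiM k =
      Set.indicator {x | (u k : EuclideanSpace ℝ (Fin n) → ℝ) x ≤ a} (fun _ => (1 : ℝ))) :
    (∑' k : ℕ, ∫⁻ x, ENNReal.ofReal
        (chiP (k + 1) x * chiM k x + chiM (k + 1) x * chiP k x) ∂(volume.restrict Ω)) < ⊤
    ∧ ((∀ k : ℕ, ∀ᵐ x ∂(volume.restrict Ω), chiP k x + chiM k x = 1) →
        ∃ A B : Set (EuclideanSpace ℝ (Fin n)), MeasurableSet A ∧ MeasurableSet B ∧
          (∀ᵐ x ∂(volume.restrict Ω),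
            A.indicator (fun _ => (1 : ℝ)) x + B.indicator (fun _ => (1 : ℝ)) x = 1) ∧
          Tendsto (fun k : ℕ => ∫⁻ x, ENNReal.ofReal
              |chiP k x - A.indicator (fun _ => (1 : ℝ)) x| ∂(volume.restrict Ω)) atTop (nhds 0) ∧
          Tendsto (fun k : ℕ => ∫⁻ x, ENNReal.ofReal
              |chiM k x - B.indicator (fun _ => (1 : ℝ)) x| ∂(volume.restrict Ω)) atTop (nhds 0) ∧
          (∀ᵐ x ∂(volume.restrict Ω),
            Tendsto (fun k : ℕ => chiP k x) atTop (nhds (A.indicator (fun _ => (1 : ℝ)) x)) ∧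
            Tendsto (fun k : ℕ => chiM k x) atTop (nhds (B.indicator (fun _ => (1 : ℝ)) x)))) := by
  set P : ℕ → Set (EuclideanSpace ℝ (Fin n)) := fun k => {x | b ≤ u k x}
  set M : ℕ → Set (EuclideanSpace ℝ (Fin n)) := fun k => {x | u k x ≤ a}
  have hP : ∀ k, MeasurableSet (P k) :=
    fun k => measurableSet_le measurable_const (Lp.stronglyMeasurable (u k)).measurable
  have hM : ∀ k, MeasurableSet (M k) :=
    fun k => measurableSet_le (Lp.stronglyMeasurable (u k)).measurable measurable_const
  have hcross := Lp.tsum_meas_crossings_ne_top u hsum hab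
  refine ⟨?_, fun hpart => ?_⟩
  · refine lt_of_eq_of_lt (tsum_congr fun k => ?_) hcross.lt_top
    rw [hchiP, hchiM, hchiP, hchiM]
    exact lintegral_ofReal_indicator_mul_add_indicator_mul ((hP _).inter (hM _))
      ((hM _).inter (hP _))
  have hMP : ∀ᵐ x ∂(volume.restrict Ω), ∀ k, x ∈ M k ↔ x ∉ P k :=
    ae_all_iff.2 fun k => (hpart k).mono fun x hx => by
      rwa [hchiP, hchiM, indicator_one_add_indicator_one_eq_one_iff] at hx
  have hflips : ∑' k, volume.restrict Ω (P (k + 1) ∆ P k) ≠ ∞ :=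
    ne_top_of_le_ne_top hcross
      (ENNReal.tsum_le_tsum (measure_symmDiff_succ_le_of_ae_mem_iff_notMem hMP))
  set A : Set (EuclideanSpace ℝ (Fin n)) := liminf P atTop
  have hA : MeasurableSet A := MeasurableSet.measurableSet_liminf hP
  refine ⟨A, Aᶜ, hA, hA.compl,
    ae_of_all _ fun x => indicator_self_add_compl_apply _ _ x, ?_, ?_, ?_⟩
  · refine (tendsto_measure_symmDiff_liminf hflips).congr fun k => ?_
    rw [hchiP]
    exact (lintegral_ofReal_abs_indicator_sub_indicator (hP k) hA).symm
  · refine (tendsto_measure_symmDiff_liminf hflips).congr fun k => ?_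
    rw [hchiM]
    rw [lintegral_ofReal_abs_indicator_sub_indicator (hM k) hA.compl]
    exact (measure_symmDiff_compl_of_ae_mem_iff_notMem hMP k A).symm
  · filter_upwards [ae_eventually_mem_iff_mem_liminf hflips, hMP] with x hx hxMP
    simp only [hchiP, hchiM, tendsto_indicator_const_apply_iff_eventually]
    exact ⟨hx, hx.mono fun k hk => by rw [hxMP k, hk, mem_compl_iff]⟩

/-- let `(u_k) ⊂ L²(Ω)` with `Σ ‖u_{k+1} − u_k‖² < ∞`, `b > a`, and let
`χ_k⁺, χ_k⁻` be the characteristic functions of `A_k⁺ = {u_k ≥ b}`, `A_k⁻ = {u_k ≤ a}`. Then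
`Σ_k ‖χ_{k+1}⁺χ_k⁻ + χ_{k+1}⁻χ_k⁺‖_{L¹} < ∞`; moreover, if `χ_k⁺ + χ_k⁻ = 1` a.e. for all `k`,
then there are characteristic functions `χ⁺, χ⁻` with `χ⁺ + χ⁻ = 1` a.e. such that
`χ_k⁺ → χ⁺` and `χ_k⁻ → χ⁻` in `L¹(Ω)` and pointwise almost everywhere. -/
theorem chi_plus_minus_converge (n : ℕ) (Ω : Set (EuclideanSpace ℝ (Fin n)))
    (hΩ : MeasurableSet Ω) (hfin : volume Ω < ⊤)
    (u : ℕ → Lp ℝ 2 (volume.restrict Ω))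
    (hsum : Summable fun k : ℕ => ‖u (k + 1) - u k‖ ^ 2)
    (a b : ℝ) (hab : a < b)
    -- the characteristic functions of `A_k⁺` and `A_k⁻`:
    (chiP chiM : ℕ → EuclideanSpace ℝ (Fin n) → ℝ)
    (hchiP : ∀ k, chiP k =
      Set.indicator {x | b ≤ (u k : EuclideanSpace ℝ (Fin n) → ℝ) x} (fun _ => (1 : ℝ)))
    (hchiM : ∀ k, chiM k =
      Set.indicator {x | (u k : EuclideanSpace ℝ (Fin n) → ℝ) x ≤ a} (fun _ => (1 : ℝ))) :
    (∑' k : ℕ, ∫⁻ x, ENNReal.ofReal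
        (chiP (k + 1) x * chiM k x + chiM (k + 1) x * chiP k x) ∂(volume.restrict Ω)) < ⊤
    ∧ ((∀ k : ℕ, ∀ᵐ x ∂(volume.restrict Ω), chiP k x + chiM k x = 1) →
        ∃ A B : Set (EuclideanSpace ℝ (Fin n)), MeasurableSet A ∧ MeasurableSet B ∧
          (∀ᵐ x ∂(volume.restrict Ω),
            A.indicator (fun _ => (1 : ℝ)) x + B.indicator (fun _ => (1 : ℝ)) x = 1) ∧
          Tendsto (fun k : ℕ => ∫⁻ x, ENNReal.ofReal
              |chiP k x - A.indicator (fun _ => (1 : ℝ)) x| ∂(volume.restrict Ω)) atTop (nhds 0) ∧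
          Tendsto (fun k : ℕ => ∫⁻ x, ENNReal.ofReal
              |chiM k x - B.indicator (fun _ => (1 : ℝ)) x| ∂(volume.restrict Ω)) atTop (nhds 0) ∧
          (∀ᵐ x ∂(volume.restrict Ω),
            Tendsto (fun k : ℕ => chiP k x) atTop (nhds (A.indicator (fun _ => (1 : ℝ)) x)) ∧
            Tendsto (fun k : ℕ => chiM k x) atTop (nhds (B.indicator (fun _ => (1 : ℝ)) x)))) :=
  chi_plus_minus_converge_general n Ω u hsum a b hab chiP chiM hchiP hchiM
end
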